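/- Let S be a simply-connected shape in the triangular grid with at least two points. Then there exists a point v ∈ S that is SCE (strictly convex and erodable) w.r.t. S, i.e., the neighbors of v outside S form a single maximal arc of at least 3 consecutive neighbors, and some neighbor of v lies in an infinite connected component of the complement of S. -/

import Mathlib

/-- The triangular grid: the simple graph on ℤ × ℤ where two vertices are adjacent
iff their difference lies in {(1,0),(−1,0),(0,1),(0,−1),(1,−1),(−1,1)}. -/
def triGrid : SimpleGraph (ℤ × ℤ) where
  Adj u v := (u.1 - v.1, u.2 - v.2) ∈
    ({(1,0), (-1,0), (0,1), (0,-1), (1,-1), (-1,1)} : Set (ℤ × ℤ))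
  symm := by
    constructor
    intro u v h
    simp only [Set.mem_insert_iff, Set.mem_singleton_iff, Prod.mk.injEq] at h ⊢
    omega
  loopless := by
    constructor
    intro u h
    simp only [Set.mem_insert_iff, Set.mem_singleton_iff, Prod.mk.injEq] at h
    omega

/-- The subgraph of the triangular grid induced by `S`, viewed as a graph on all of
ℤ × ℤ (vertices outside `S` are isolated): an edge requires both endpoints in `S`. -/
def gOn (S : Set (ℤ × ℤ)) : SimpleGraph (ℤ × ℤ) where
  Adj u v := triGrid.Adj u v ∧ u ∈ S ∧ v ∈ S
  symm := ⟨fun u v h => ⟨triGrid.adj_symm h.1, h.2.2, h.2.1⟩⟩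
  loopless := ⟨fun u h => triGrid.loopless.irrefl u h.1⟩

/-- A shape: a finite nonempty set of grid points. -/
def IsShape (S : Set (ℤ × ℤ)) : Prop := S.Finite ∧ S.Nonempty

/-- The subgraph of the grid induced by `S` is connected. -/
def ShapeConnected (S : Set (ℤ × ℤ)) : Prop :=
  ∀ u ∈ S, ∀ v ∈ S, (gOn S).Reachable u v

/-- A connected shape. -/
def ConnectedShape (S : Set (ℤ × ℤ)) : Prop := IsShape S ∧ ShapeConnected S

/-- The connected component of `x` in the subgraph induced by the complement of `S`. -/
def compOf (S : Set (ℤ × ℤ)) (x : ℤ × ℤ) : Set (ℤ × ℤ) :=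
  {y | (gOn Sᶜ).Reachable x y}

/-- A hole point of `S`: a point lying in a finite connected component of the
complement of `S`. -/
def IsHolePoint (S : Set (ℤ × ℤ)) (x : ℤ × ℤ) : Prop :=
  x ∉ S ∧ (compOf S x).Finite

/-- A simply-connected shape: connected and with no holes. -/
def SimplyConnectedShape (S : Set (ℤ × ℤ)) : Prop :=
  ConnectedShape S ∧ ∀ x, ¬ IsHolePoint S x

/-- Graph distance within the subgraph induced by `S`. -/
noncomputable def distS (S : Set (ℤ × ℤ)) (u v : ℤ × ℤ) : ℕ := (gOn S).dist u v

/-- Diameter of the shape `S` w.r.t. `distS`. -/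
noncomputable def shapeDiam (S : Set (ℤ × ℤ)) : ℕ :=
  sSup {d : ℕ | ∃ u ∈ S, ∃ v ∈ S, distS S u v = d}

/-- A boundary point of `S`: a point of `S` with a neighbor outside `S`. -/
def IsBoundaryPt (S : Set (ℤ × ℤ)) (v : ℤ × ℤ) : Prop :=
  v ∈ S ∧ ∃ w, triGrid.Adj v w ∧ w ∉ S

/-- An outer boundary point of `S`: a point of `S` with a neighbor lying in an
infinite connected component of the complement of `S`. -/
def IsOuterBoundaryPt (S : Set (ℤ × ℤ)) (v : ℤ × ℤ) : Prop :=
  v ∈ S ∧ ∃ w, triGrid.Adj v w ∧ w ∉ S ∧ (compOf S w).Infinite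

/-- An interior point of `S`: a point of `S` all of whose neighbors lie in `S`. -/
def IsInteriorPt (S : Set (ℤ × ℤ)) (v : ℤ × ℤ) : Prop :=
  v ∈ S ∧ ∀ w, triGrid.Adj v w → w ∈ S

/-- The six neighbor directions of a grid point, in cyclic order. -/
def dirs : Fin 6 → ℤ × ℤ := ![(1,0), (0,1), (-1,1), (-1,0), (0,-1), (1,-1)]

/-- The `i`-th neighbor of `v`, in the cyclic order of the 6-cycle of neighbors. -/
def nbr (v : ℤ × ℤ) (i : Fin 6) : ℤ × ℤ := (v.1 + (dirs i).1, v.2 + (dirs i).2)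

/-- The neighbors of `v` lying in `S`. -/
def nbrsIn (S : Set (ℤ × ℤ)) (v : ℤ × ℤ) : Set (ℤ × ℤ) :=
  {w | triGrid.Adj v w ∧ w ∈ S}

/-- `v` is redundant w.r.t. `S`: the neighbors of `v` in `S` induce a connected
subgraph of the grid. -/
def Redundant (S : Set (ℤ × ℤ)) (v : ℤ × ℤ) : Prop :=
  ∀ u ∈ nbrsIn S v, ∀ w ∈ nbrsIn S v, (gOn (nbrsIn S v)).Reachable u w

/-- `v` is erodable w.r.t. `S`: redundant and an outer boundary point of `S`. -/
def Erodable (S : Set (ℤ × ℤ)) (v : ℤ × ℤ) : Prop :=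
  Redundant S v ∧ IsOuterBoundaryPt S v

/-- A set of indices of neighbors that is an arc: a nonempty set of consecutive
positions in the cyclic order. -/
def IsArc (I : Set (Fin 6)) : Prop :=
  ∃ (a : Fin 6) (len : ℕ), 0 < len ∧ len ≤ 6 ∧
    I = {i | ∃ k : ℕ, k < len ∧ i = a + (Fin.ofNat 6 k)}

/-- The index set of the neighbors of `v` lying outside `S`. -/
def outIdx (S : Set (ℤ × ℤ)) (v : ℤ × ℤ) : Set (Fin 6) := {i | nbr v i ∉ S}

/-- A maximal arc of `v` w.r.t. `S`: a maximal arc of consecutive neighbors of `v`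
none of which lies in `S`. -/
def IsMaximalArc (S : Set (ℤ × ℤ)) (v : ℤ × ℤ) (I : Set (Fin 6)) : Prop :=
  IsArc I ∧ (∀ i ∈ I, nbr v i ∉ S) ∧
  ∀ J : Set (Fin 6), IsArc J → (∀ i ∈ J, nbr v i ∉ S) → I ⊆ J → I = J

/-- `v` is SCE (strictly convex and erodable) w.r.t. `S`: the neighbors of `v`
outside `S` form a single (maximal) arc of at least 3 points, and some neighbor of
`v` lies in an infinite connected component of the complement of `S`. -/
def SCE (S : Set (ℤ × ℤ)) (v : ℤ × ℤ) : Prop :=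
  IsArc (outIdx S v) ∧ 3 ≤ (outIdx S v).ncard ∧
  ∃ i : Fin 6, nbr v i ∉ S ∧ (compOf S (nbr v i)).Infinite

/-- The level set `L_i` of `l` in `S`. -/
noncomputable def levelSet (S : Set (ℤ × ℤ)) (l : ℤ × ℤ) (i : ℕ) : Set (ℤ × ℤ) :=
  {u ∈ S | distS S l u = i}

/-- The closed neighborhood `N_i` of `l` in `S`. -/
noncomputable def closedNbhd (S : Set (ℤ × ℤ)) (l : ℤ × ℤ) (i : ℕ) : Set (ℤ × ℤ) :=
  {u ∈ S | distS S l u ≤ i}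

/-- `v ∈ L_i` is `(i,k)`-SCE-related: some `u ∈ L_i` is SCE w.r.t. `N_i` and is at
distance at most `k` from `v` within the subgraph induced by `L_i`. -/
noncomputable def SCERelated (S : Set (ℤ × ℤ)) (l : ℤ × ℤ) (i k : ℕ) (v : ℤ × ℤ) : Prop :=
  ∃ u ∈ levelSet S l i, SCE (closedNbhd S l i) u ∧
    (gOn (levelSet S l i)).Reachable v u ∧ (gOn (levelSet S l i)).dist v u ≤ k


namespace SCEAux

open SimpleGraph

abbrev Pt := ℤ × ℤ

/-- Doubled horizontal coordinate in the standard embedding of the triangular grid. -/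
def Xc (p : Pt) : ℤ := 2 * p.1 + p.2

/-- The edge `(u,u')` crosses the downward ray based just left-below of `p`. -/
def vc (p u u' : Pt) : Prop :=
  ((Xc u < Xc p) ↔ ¬ (Xc u' < Xc p)) ∧ (u.2 + u'.2 < 2 * p.2)

instance (p u u' : Pt) : Decidable (vc p u u') := by unfold vc; infer_instance

/-- `q` is in the strip region between the rays of `p` and `p'`. -/
def Inp (p p' q : Pt) : Prop :=
  Xc p ≤ Xc q ∧ Xc q < Xc p' ∧
    4 * (Xc p' - Xc p) * q.2 <
      (Xc p' - Xc p) * (4 * p.2 - 1) + (p'.2 - p.2) * (4 * Xc q - 4 * Xc p + 2)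

instance (p p' q : Pt) : Decidable (Inp p p' q) := by unfold Inp; infer_instance

lemma adj_iff' {u u' : Pt} : triGrid.Adj u u' ↔
    ((u.1 = u'.1 + 1 ∧ u.2 = u'.2) ∨ (u.1 = u'.1 - 1 ∧ u.2 = u'.2) ∨
     (u.1 = u'.1 ∧ u.2 = u'.2 + 1) ∨ (u.1 = u'.1 ∧ u.2 = u'.2 - 1) ∨
     (u.1 = u'.1 + 1 ∧ u.2 = u'.2 - 1) ∨ (u.1 = u'.1 - 1 ∧ u.2 = u'.2 + 1)) := by
  show (u.1 - u'.1, u.2 - u'.2) ∈ _ ↔ _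
  simp only [Set.mem_insert_iff, Set.mem_singleton_iff, Prod.mk.injEq]
  omega

set_option maxHeartbeats 1000000 in
/-- The core per-edge crossing-parity identity. -/
lemma pe_arith (p p' u u' : Pt)
    (hd : p' = (p.1 + 1, p.2) ∨ p' = (p.1, p.2 + 1) ∨ p' = (p.1 + 1, p.2 - 1))
    (he : triGrid.Adj u u')
    (hu1 : ¬(u.1 = p.1 ∧ u.2 = p.2)) (hu2 : ¬(u.1 = p'.1 ∧ u.2 = p'.2))
    (hu3 : ¬(u'.1 = p.1 ∧ u'.2 = p.2)) (hu4 : ¬(u'.1 = p'.1 ∧ u'.2 = p'.2)) :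
    ((vc p u u') ↔ (vc p' u u')) ↔ ((Inp p p' u) ↔ (Inp p p' u')) := by
  obtain ⟨x, y⟩ := u
  obtain ⟨x', y'⟩ := u'
  rw [adj_iff'] at he
  simp only at he
  rcases hd with hd | hd | hd <;> subst hd <;>
    rcases he with ⟨h1, h2⟩ | ⟨h1, h2⟩ | ⟨h1, h2⟩ | ⟨h1, h2⟩ | ⟨h1, h2⟩ | ⟨h1, h2⟩ <;>
      subst h1 <;> subst h2 <;> simp only [vc, Inp, Xc, Prod.fst, Prod.snd] at * <;> omega

set_option maxHeartbeats 1000000 in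
/-- The per-edge identity for the double step `p → p + (2,0)`. -/
lemma pe_arith2 (px py : ℤ) (u u' : Pt)
    (he : triGrid.Adj u u')
    (hu1 : ¬(u.1 = px ∧ u.2 = py)) (hu2 : ¬(u.1 = px + 2 ∧ u.2 = py))
    (hu3 : ¬(u'.1 = px ∧ u'.2 = py)) (hu4 : ¬(u'.1 = px + 2 ∧ u'.2 = py))
    (hu5 : ¬(u.1 = px + 1 ∧ u.2 = py)) (hu6 : ¬(u'.1 = px + 1 ∧ u'.2 = py)) :
    ((vc (px, py) u u') ↔ (vc (px + 2, py) u u')) ↔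
      ((Inp (px, py) (px + 2, py) u) ↔ (Inp (px, py) (px + 2, py) u')) := by
  obtain ⟨x, y⟩ := u
  obtain ⟨x', y'⟩ := u'
  rw [adj_iff'] at he
  simp only at he
  rcases he with ⟨h1, h2⟩ | ⟨h1, h2⟩ | ⟨h1, h2⟩ | ⟨h1, h2⟩ | ⟨h1, h2⟩ | ⟨h1, h2⟩ <;>
    subst h1 <;> subst h2 <;> simp only [vc, Inp, Xc, Prod.fst, Prod.snd] at * <;> omega

end SCEAux
namespace SCEAux

/-- Count of steps of a walk satisfying a predicate on (ordered) edges. -/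
def wcnt {V : Type} {G : SimpleGraph V} (f : V → V → Bool) :
    ∀ {x y : V}, G.Walk x y → ℕ
  | _, _, .nil => 0
  | x, _, .cons (v := z) _ q => (cond (f x z) 1 0) + wcnt f q

lemma wcnt_nil {V : Type} {G : SimpleGraph V} (f : V → V → Bool) (x : V) :
    wcnt f (SimpleGraph.Walk.nil : G.Walk x x) = 0 := rfl

lemma wcnt_cons {V : Type} {G : SimpleGraph V} (f : V → V → Bool) {x z y : V}
    (h : G.Adj x z) (q : G.Walk z y) :
    wcnt f (SimpleGraph.Walk.cons h q) = (cond (f x z) 1 0) + wcnt f q := rfl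

lemma wcnt_append {V : Type} {G : SimpleGraph V} (f : V → V → Bool) {x y z : V}
    (p : G.Walk x y) (q : G.Walk y z) :
    wcnt f (p.append q) = wcnt f p + wcnt f q := by
  induction p with
  | nil => simp [wcnt_nil, SimpleGraph.Walk.nil_append]
  | cons h p ih =>
      rw [SimpleGraph.Walk.cons_append, wcnt_cons, wcnt_cons, ih]
      omega

/-- Telescoping parity: if each step's indicator agrees with a boundary change of `h`,
the count's parity is determined by the endpoints. -/
lemma wcnt_parity {V : Type} {G : SimpleGraph V} (f : V → V → Bool) (h : V → Bool) :
    ∀ {x y : V} (p : G.Walk x y),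
    (∀ u u', G.Adj u u' → u ∈ p.support → u' ∈ p.support → f u u' = (h u != h u')) →
    wcnt f p % 2 = (if h x = h y then 0 else 1) := by
  intro x y p
  induction p with
  | nil => intro _; simp [wcnt_nil]
  | @cons x z y hadj q ih =>
      intro H
      have h1 : f x z = (h x != h z) := by
        refine H x z hadj ?_ ?_ <;> simp [SimpleGraph.Walk.support_cons, q.start_mem_support]
      have h2 := ih (fun u u' ha hu hu' => H u u' ha
        (by simp [SimpleGraph.Walk.support_cons, hu]) (by simp [SimpleGraph.Walk.support_cons, hu']))
      rw [wcnt_cons, h1]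
      cases hx : h x <;> cases hz : h z <;> cases hy : h y <;>
        simp_all <;> omega

lemma wcnt_mod2_add {V : Type} {G : SimpleGraph V} (f g : V → V → Bool) {x y : V}
    (p : G.Walk x y) :
    (wcnt f p + wcnt g p) % 2 = wcnt (fun u u' => f u u' != g u u') p % 2 := by
  induction p with
  | nil => simp [wcnt_nil]
  | @cons x z y hadj q ih =>
      rw [wcnt_cons, wcnt_cons, wcnt_cons]
      cases hf : f x z <;> cases hg : g x z <;> simp <;> omega

lemma wcnt_eq_zero {V : Type} {G : SimpleGraph V} (f : V → V → Bool) {x y : V}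
    (p : G.Walk x y)
    (H : ∀ u u', G.Adj u u' → u ∈ p.support → u' ∈ p.support → f u u' = false) :
    wcnt f p = 0 := by
  induction p with
  | nil => rfl
  | @cons x z y hadj q ih =>
      rw [wcnt_cons]
      have h1 : f x z = false := by
        refine H x z hadj ?_ ?_ <;> simp [SimpleGraph.Walk.support_cons, q.start_mem_support]
      rw [h1]
      simp only [cond_false, Nat.zero_add]
      exact ih (fun u u' ha hu hu' => H u u' ha
        (by simp [SimpleGraph.Walk.support_cons, hu]) (by simp [SimpleGraph.Walk.support_cons, hu']))

/-- All support vertices of a walk in `gOn T` lie in `T` (given the start does). -/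
lemma gOn_walk_support_mem {T : Set Pt} : ∀ {x y : Pt} (W : (gOn T).Walk x y),
    x ∈ T → ∀ z ∈ W.support, z ∈ T := by
  intro x y W
  induction W with
  | nil => intro hx z hz; simp at hz; subst hz; exact hx
  | @cons x z y hadj q ih =>
      intro hx w hw
      rw [SimpleGraph.Walk.support_cons] at hw
      rcases List.mem_cons.mp hw with rfl | hw
      · exact hx
      · exact ih hadj.2.2 w hw

end SCEAux
namespace SCEAux

open SimpleGraph

lemma decide_bne {P Q R T : Prop} [Decidable P] [Decidable Q] [Decidable R] [Decidable T]
    (hIff : (P ↔ Q) ↔ (R ↔ T)) :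
    ((decide P : Bool) != decide Q) = ((decide R : Bool) != decide T) := by
  by_cases hP : P <;> by_cases hQ : Q <;> by_cases hR : R <;> by_cases hT : T <;> simp_all

section Eta

variable {S : Set Pt} {aa : Pt}

/-- Crossing parity of the closed walk `C` w.r.t. the downward ray at `p`. -/
def eta (C : (gOn S).Walk aa aa) (p : Pt) : ℕ :=
  wcnt (fun u u' => decide (vc p u u')) C % 2

lemma ne_of_mem_not_mem {u p : Pt} (hu : u ∈ S) (hp : p ∉ S) :
    ¬(u.1 = p.1 ∧ u.2 = p.2) := by
  rintro ⟨h1, h2⟩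
  exact hp ((Prod.ext h1 h2 : u = p) ▸ hu)

lemma par_eq {x y z : ℕ} (h1 : (x + y) % 2 = z % 2) (h2 : z % 2 = 0) :
    x % 2 = y % 2 := by omega

lemma eta_step_core (C : (gOn S).Walk aa aa) (p p' : Pt)
    (hd : p' = (p.1 + 1, p.2) ∨ p' = (p.1, p.2 + 1) ∨ p' = (p.1 + 1, p.2 - 1))
    (hp : p ∉ S) (hp' : p' ∉ S) : eta C p = eta C p' := by
  have hxor := wcnt_mod2_add (fun u u' => decide (vc p u u'))
    (fun u u' => decide (vc p' u u')) C
  have hpar := wcnt_parity (G := gOn S)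
    (fun u u' => (decide (vc p u u') != decide (vc p' u u')))
    (fun q => decide (Inp p p' q)) C ?_
  · rw [if_pos rfl] at hpar
    unfold eta
    exact par_eq hxor hpar
  · intro u u' ha _ _
    have hu : u ∈ S := ha.2.1
    have hu' : u' ∈ S := ha.2.2
    exact decide_bne (pe_arith p p' u u' hd ha.1 (ne_of_mem_not_mem hu hp)
      (ne_of_mem_not_mem hu hp') (ne_of_mem_not_mem hu' hp) (ne_of_mem_not_mem hu' hp'))

lemma eta_step (C : (gOn S).Walk aa aa) (p p' : Pt)
    (hadj : triGrid.Adj p p') (hp : p ∉ S) (hp' : p' ∉ S) : eta C p = eta C p' := by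
  obtain ⟨px, py⟩ := p
  obtain ⟨qx, qy⟩ := p'
  rcases adj_iff'.mp hadj with ⟨h1, h2⟩ | ⟨h1, h2⟩ | ⟨h1, h2⟩ | ⟨h1, h2⟩ | ⟨h1, h2⟩ | ⟨h1, h2⟩ <;>
    simp only at h1 h2
  · exact (eta_step_core C (qx, qy) (px, py)
      (by left; rw [Prod.mk.injEq]; omega) hp' hp).symm
  · exact eta_step_core C (px, py) (qx, qy) (by left; rw [Prod.mk.injEq]; omega) hp hp'
  · exact (eta_step_core C (qx, qy) (px, py)
      (by right; left; rw [Prod.mk.injEq]; omega) hp' hp).symm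
  · exact eta_step_core C (px, py) (qx, qy)
      (by right; left; rw [Prod.mk.injEq]; omega) hp hp'
  · exact (eta_step_core C (qx, qy) (px, py)
      (by right; right; rw [Prod.mk.injEq]; omega) hp' hp).symm
  · exact eta_step_core C (px, py) (qx, qy)
      (by right; right; rw [Prod.mk.injEq]; omega) hp hp'

lemma eta_walkinv (C : (gOn S).Walk aa aa) :
    ∀ {s t : Pt} (_ : (gOn Sᶜ).Walk s t), eta C s = eta C t := by
  intro s t Q
  induction Q with
  | nil => rfl
  | @cons x z y hadj q ih =>
      exact (eta_step C x z hadj.1 hadj.2.1 hadj.2.2).trans ih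

end Eta

end SCEAux
namespace SCEAux

open SimpleGraph

variable {S : Set Pt} {aa : Pt}

lemma eta_far_right (C : (gOn S).Walk aa aa) (q : Pt) (hS : ∀ z ∈ S, Xc z < Xc q) :
    eta C q = 0 := by
  unfold eta
  rw [wcnt_eq_zero]
  intro u u' ha _ _
  have h1 := hS u ha.2.1
  have h2 := hS u' ha.2.2
  show decide (vc q u u') = false
  rw [decide_eq_false_iff_not]; simp only [vc]
  omega

lemma eta_far_left (C : (gOn S).Walk aa aa) (q : Pt) (hS : ∀ z ∈ S, Xc q < Xc z) :
    eta C q = 0 := by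
  unfold eta
  rw [wcnt_eq_zero]
  intro u u' ha _ _
  have h1 := hS u ha.2.1
  have h2 := hS u' ha.2.2
  show decide (vc q u u') = false
  rw [decide_eq_false_iff_not]; simp only [vc]
  omega

lemma eta_far_down (C : (gOn S).Walk aa aa) (q : Pt) (hS : ∀ z ∈ S, q.2 ≤ z.2) :
    eta C q = 0 := by
  unfold eta
  rw [wcnt_eq_zero]
  intro u u' ha _ _
  have h1 := hS u ha.2.1
  have h2 := hS u' ha.2.2
  show decide (vc q u u') = false
  rw [decide_eq_false_iff_not]; simp only [vc]
  omega

lemma eta_far_up (C : (gOn S).Walk aa aa) (q : Pt) (hS : ∀ z ∈ S, z.2 < q.2) :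
    eta C q = 0 := by
  unfold eta
  have hpar := wcnt_parity (G := gOn S) (fun u u' => decide (vc q u u'))
    (fun z => decide (Xc z < Xc q)) C ?_
  · rwa [if_pos rfl] at hpar
  · intro u u' ha _ _
    have h1 := hS u ha.2.1
    have h2 := hS u' ha.2.2
    have hy : u.2 + u'.2 < 2 * q.2 := by omega
    by_cases hA : Xc u < Xc q <;> by_cases hB : Xc u' < Xc q <;>
      simp [vc, hA, hB, hy]

lemma exists_bound {S : Set Pt} (hfin : S.Finite) :
    ∃ M : ℤ, 0 ≤ M ∧ ∀ z ∈ S, -M ≤ z.1 ∧ z.1 ≤ M ∧ -M ≤ z.2 ∧ z.2 ≤ M := by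
  classical
  refine ⟨(hfin.toFinset.sup fun p => p.1.natAbs ⊔ p.2.natAbs : ℕ), by positivity, ?_⟩
  intro z hz
  have hz' : z ∈ hfin.toFinset := hfin.mem_toFinset.mpr hz
  have h1 : z.1.natAbs ⊔ z.2.natAbs ≤ hfin.toFinset.sup fun p => p.1.natAbs ⊔ p.2.natAbs :=
    Finset.le_sup (f := fun p : Pt => p.1.natAbs ⊔ p.2.natAbs) hz'
  have h2 : z.1.natAbs ≤ hfin.toFinset.sup fun p => p.1.natAbs ⊔ p.2.natAbs :=
    le_trans (le_max_left _ _) h1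
  have h3 : z.2.natAbs ≤ hfin.toFinset.sup fun p => p.1.natAbs ⊔ p.2.natAbs :=
    le_trans (le_max_right _ _) h1
  omega

lemma eta_of_far (C : (gOn S).Walk aa aa) (M : ℤ) (h0 : 0 ≤ M)
    (hM : ∀ z ∈ S, -M ≤ z.1 ∧ z.1 ≤ M ∧ -M ≤ z.2 ∧ z.2 ≤ M)
    (q : Pt) (hq : ¬(q ∈ Set.Icc ((-(4*M+4), -(4*M+4)) : Pt) ((4*M+4, 4*M+4) : Pt))) :
    eta C q = 0 := by
  rw [Set.mem_Icc, Prod.le_def, Prod.le_def] at hq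
  simp only [not_and_or, not_le] at hq
  by_cases hy1 : 4*M+4 < q.2
  · exact eta_far_up C q (fun z hz => by have := hM z hz; omega)
  · by_cases hy2 : q.2 < -(4*M+4)
    · exact eta_far_down C q (fun z hz => by have := hM z hz; omega)
    · by_cases hx1 : 4*M+4 < q.1
      · exact eta_far_right C q (fun z hz => by have := hM z hz; simp only [Xc]; omega)
      · have hx2 : q.1 < -(4*M+4) := by
          rcases hq with (h | h) | (h | h) <;> omega
        exact eta_far_left C q (fun z hz => by have := hM z hz; simp only [Xc]; omega)

lemma mapLe_support {V : Type} {G G' : SimpleGraph V} (h : G ≤ G') {u v : V}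
    (p : G.Walk u v) : (p.mapLe h).support = p.support := by
  rw [Walk.mapLe, Walk.support_map]
  exact List.map_id _

lemma comp_far {S : Set Pt} {x : Pt} (hinf : (compOf S x).Infinite) (R : ℤ) :
    ∃ q ∈ compOf S x, ¬(q ∈ Set.Icc ((-R, -R) : Pt) ((R, R) : Pt)) := by
  have hnot : ¬ (compOf S x ⊆ Set.Icc ((-R, -R) : Pt) ((R, R) : Pt)) := by
    intro hsub
    exact hinf ((Set.finite_Icc _ _).subset hsub)
  obtain ⟨q, hq1, hq2⟩ := Set.not_subset.mp hnot
  exact ⟨q, hq1, hq2⟩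

end SCEAux
namespace SCEAux

open SimpleGraph

lemma adj_mk {x1 y1 x2 y2 : ℤ}
    (h : (x1 = x2+1 ∧ y1 = y2) ∨ (x1 = x2-1 ∧ y1 = y2) ∨ (x1 = x2 ∧ y1 = y2+1) ∨
         (x1 = x2 ∧ y1 = y2-1) ∨ (x1 = x2+1 ∧ y1 = y2-1) ∨ (x1 = x2-1 ∧ y1 = y2+1)) :
    triGrid.Adj (x1,y1) (x2,y2) := adj_iff'.mpr h

set_option maxHeartbeats 1000000 in
/-- The key topological fact: in the "bad corner" configuration at a rightmost
point `v`, with `a, b ∈ S` and `m ∉ S` escaping to infinity, the two neighbours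
`a` and `b` cannot be connected within `S \ {v}`. -/
lemma noReach {S : Set Pt} (hfin : S.Finite) (vx vy : ℤ) (hv : ((vx, vy) : Pt) ∈ S)
    (hlex : ∀ q ∈ S, q.1 ≤ vx)
    (ha : ((vx - 1, vy + 1) : Pt) ∈ S) (hb : ((vx, vy - 1) : Pt) ∈ S)
    (hm : ((vx - 1, vy) : Pt) ∉ S)
    (hminf : (compOf S ((vx - 1, vy) : Pt)).Infinite) :
    ¬ (gOn (S \ {((vx, vy) : Pt)})).Reachable (vx - 1, vy + 1) (vx, vy - 1) := by
  intro hreach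
  obtain ⟨P⟩ := hreach
  have hwS : ((vx - 1 + 2, vy) : Pt) ∉ S := by
    intro h
    have h2 : vx - 1 + 2 ≤ vx := hlex _ h
    omega
  have hle : gOn (S \ {((vx, vy) : Pt)}) ≤ gOn S := by
    intro x y hxy
    exact ⟨hxy.1, hxy.2.1.1, hxy.2.2.1⟩
  have hAdjbv : (gOn S).Adj (vx, vy - 1) (vx, vy) :=
    ⟨adj_mk (by right; right; right; left; omega), hb, hv⟩
  have hAdjva : (gOn S).Adj (vx, vy) (vx - 1, vy + 1) :=
    ⟨adj_mk (by right; right; right; right; left; omega), hv, ha⟩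
  set Pm : (gOn S).Walk (vx - 1, vy + 1) (vx, vy - 1) := P.mapLe hle with hPm
  set C : (gOn S).Walk (vx - 1, vy + 1) (vx - 1, vy + 1) :=
    Pm.append (Walk.cons hAdjbv (Walk.cons hAdjva Walk.nil)) with hC
  have haSv : ((vx - 1, vy + 1) : Pt) ∈ S \ {((vx, vy) : Pt)} := by
    refine ⟨ha, ?_⟩
    intro hcon
    rw [Set.mem_singleton_iff, Prod.mk.injEq] at hcon
    omega
  have hPsup : ∀ z ∈ Pm.support, z ∈ S \ {((vx, vy) : Pt)} := by
    intro z hz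
    rw [hPm, mapLe_support hle P] at hz
    exact gOn_walk_support_mem P haSv z hz
  obtain ⟨M, hM0, hM⟩ := exists_bound hfin
  have hm0 : eta C ((vx - 1, vy) : Pt) = 0 := by
    obtain ⟨q, hq1, hq2⟩ := comp_far hminf (4 * M + 4)
    have hq1' : (gOn Sᶜ).Reachable (vx - 1, vy) q := hq1
    obtain ⟨Q⟩ := hq1'
    rw [eta_walkinv C Q]
    exact eta_of_far C M hM0 hM q hq2
  have hray : ∀ k : ℕ, eta C ((vx - 1 + 2, vy) : Pt) = eta C ((vx - 1 + 2 + k, vy) : Pt) := by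
    intro k
    induction k with
    | zero => norm_num
    | succ n ih =>
        rw [ih]
        have hnS : ((vx - 1 + 2 + (n : ℤ), vy) : Pt) ∉ S := by
          intro h; have h2 : vx - 1 + 2 + (n : ℤ) ≤ vx := hlex _ h; omega
        have hnS' : ((vx - 1 + 2 + ((n + 1 : ℕ) : ℤ), vy) : Pt) ∉ S := by
          intro h; have h2 : vx - 1 + 2 + ((n + 1 : ℕ) : ℤ) ≤ vx := hlex _ h
          push_cast at h2; omega
        refine eta_step C _ _ (adj_mk ?_) hnS hnS'
        right; left; push_cast; omega
  have hw0 : eta C ((vx - 1 + 2, vy) : Pt) = 0 := by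
    rw [hray (5 * M + 10).toNat]
    refine eta_of_far C M hM0 hM _ ?_
    rw [Set.mem_Icc, Prod.le_def, Prod.le_def]
    have hvb := hM _ hv
    intro hcon
    have h1 : vx - 1 + 2 + (((5 * M + 10).toNat : ℕ) : ℤ) ≤ 4 * M + 4 := hcon.2.1
    have h2 : -M ≤ (((vx, vy) : Pt)).1 := hvb.1
    have h3 : ((0 : ℤ)) ≤ 5 * M + 10 := by omega
    omega
  have hpar := wcnt_parity (G := gOn S)
    (fun u u' => (decide (vc ((vx - 1, vy) : Pt) u u') !=
                  decide (vc ((vx - 1 + 2, vy) : Pt) u u')))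
    (fun z => decide (Inp ((vx - 1, vy) : Pt) ((vx - 1 + 2, vy) : Pt) z)) Pm ?_
  swap
  · intro u u' hadj hu hu'
    have huS := hPsup u hu
    have hu'S := hPsup u' hu'
    have h1 : ¬(u.1 = vx - 1 ∧ u.2 = vy) := ne_of_mem_not_mem huS.1 hm
    have h2 : ¬(u'.1 = vx - 1 ∧ u'.2 = vy) := ne_of_mem_not_mem hu'S.1 hm
    have h3 : ¬(u.1 = vx - 1 + 2 ∧ u.2 = vy) := ne_of_mem_not_mem huS.1 hwS
    have h4 : ¬(u'.1 = vx - 1 + 2 ∧ u'.2 = vy) := ne_of_mem_not_mem hu'S.1 hwS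
    have h5 : ¬(u.1 = vx - 1 + 1 ∧ u.2 = vy) := by
      intro hc
      exact huS.2 (by rw [Set.mem_singleton_iff, Prod.ext_iff]; exact ⟨by omega, hc.2⟩)
    have h6 : ¬(u'.1 = vx - 1 + 1 ∧ u'.2 = vy) := by
      intro hc
      exact hu'S.2 (by rw [Set.mem_singleton_iff, Prod.ext_iff]; exact ⟨by omega, hc.2⟩)
    exact decide_bne (pe_arith2 (vx - 1) vy u u' hadj.1 h1 h3 h2 h4 h5 h6)
  have hIa : ¬ Inp ((vx - 1, vy) : Pt) ((vx - 1 + 2, vy) : Pt) ((vx - 1, vy + 1) : Pt) := by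
    simp only [Inp, Xc]
    omega
  have hIb : Inp ((vx - 1, vy) : Pt) ((vx - 1 + 2, vy) : Pt) ((vx, vy - 1) : Pt) := by
    simp only [Inp, Xc]
    omega
  rw [if_neg (by simp [hIa, hIb])] at hpar
  have hxor := wcnt_mod2_add (fun u u' => decide (vc ((vx - 1, vy) : Pt) u u'))
    (fun u u' => decide (vc ((vx - 1 + 2, vy) : Pt) u u')) Pm
  have hpar' : wcnt (fun u u' =>
      (decide (vc ((vx - 1, vy) : Pt) u u') !=
       decide (vc ((vx - 1 + 2, vy) : Pt) u u'))) Pm % 2 = 1 := hpar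
  have hvc1 : (decide (vc ((vx - 1, vy) : Pt) ((vx, vy - 1) : Pt) ((vx, vy) : Pt)) : Bool)
      = false := by
    rw [decide_eq_false_iff_not]; simp only [vc, Xc]; omega
  have hvc2 : (decide (vc ((vx - 1, vy) : Pt) ((vx, vy) : Pt) ((vx - 1, vy + 1) : Pt)) : Bool)
      = false := by
    rw [decide_eq_false_iff_not]; simp only [vc, Xc]; omega
  have hvc3 : (decide (vc ((vx - 1 + 2, vy) : Pt) ((vx, vy - 1) : Pt) ((vx, vy) : Pt)) : Bool)
      = false := by
    rw [decide_eq_false_iff_not]; simp only [vc, Xc]; omega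
  have hvc4 : (decide (vc ((vx - 1 + 2, vy) : Pt) ((vx, vy) : Pt) ((vx - 1, vy + 1) : Pt)) : Bool)
      = false := by
    rw [decide_eq_false_iff_not]; simp only [vc, Xc]; omega
  unfold eta at hm0 hw0
  rw [hC, wcnt_append, wcnt_cons, wcnt_cons, wcnt_nil] at hm0 hw0
  simp only [hvc1, hvc2, hvc3, hvc4, cond_false] at hm0 hw0
  have hx2 : (wcnt (fun u u' => decide (vc ((vx - 1, vy) : Pt) u u')) Pm
      + wcnt (fun u u' => decide (vc ((vx - 1 + 2, vy) : Pt) u u')) Pm) % 2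
      = wcnt (fun u u' =>
      (decide (vc ((vx - 1, vy) : Pt) u u') !=
       decide (vc ((vx - 1 + 2, vy) : Pt) u u'))) Pm % 2 := hxor
  omega

end SCEAux
namespace SCEAux

open SimpleGraph

/-- In a simply-connected shape, every point outside has infinite complement
component. -/
lemma not_hole_infinite {S : Set Pt} (hSC : SimplyConnectedShape S) {x : Pt}
    (hx : x ∉ S) : (compOf S x).Infinite := by
  intro hfin
  exact hSC.2 x ⟨hx, hfin⟩

lemma nbr0 (v : Pt) : nbr v 0 = (v.1 + 1, v.2) := by
  rw [nbr, show dirs 0 = ((1 : ℤ), (0 : ℤ)) from by decide, Prod.mk.injEq]; omega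
lemma nbr1 (v : Pt) : nbr v 1 = (v.1, v.2 + 1) := by
  rw [nbr, show dirs 1 = ((0 : ℤ), (1 : ℤ)) from by decide, Prod.mk.injEq]; omega
lemma nbr2 (v : Pt) : nbr v 2 = (v.1 - 1, v.2 + 1) := by
  rw [nbr, show dirs 2 = ((-1 : ℤ), (1 : ℤ)) from by decide, Prod.mk.injEq]; omega
lemma nbr3 (v : Pt) : nbr v 3 = (v.1 - 1, v.2) := by
  rw [nbr, show dirs 3 = ((-1 : ℤ), (0 : ℤ)) from by decide, Prod.mk.injEq]; omega
lemma nbr4 (v : Pt) : nbr v 4 = (v.1, v.2 - 1) := by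
  rw [nbr, show dirs 4 = ((0 : ℤ), (-1 : ℤ)) from by decide, Prod.mk.injEq]; omega
lemma nbr5 (v : Pt) : nbr v 5 = (v.1 + 1, v.2 - 1) := by
  rw [nbr, show dirs 5 = ((1 : ℤ), (-1 : ℤ)) from by decide, Prod.mk.injEq]; omega

lemma dirs_cases : ∀ i : Fin 6, dirs i = (1,0) ∨ dirs i = (0,1) ∨ dirs i = (-1,1) ∨
    dirs i = (-1,0) ∨ dirs i = (0,-1) ∨ dirs i = (1,-1) := by decide

lemma dirs_inj : ∀ i j : Fin 6, dirs i = dirs j → i = j := by decide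

lemma adj_nbr (v : Pt) (i : Fin 6) : triGrid.Adj v (nbr v i) := by
  rw [adj_iff']
  simp only [nbr]
  rcases dirs_cases i with h | h | h | h | h | h <;> rw [h] <;> simp <;> omega

lemma adj_eq_nbr {v q : Pt} (h : triGrid.Adj v q) : ∃ i : Fin 6, q = nbr v i := by
  rw [adj_iff'] at h
  obtain ⟨qx, qy⟩ := q
  rcases h with ⟨h1, h2⟩ | ⟨h1, h2⟩ | ⟨h1, h2⟩ | ⟨h1, h2⟩ | ⟨h1, h2⟩ | ⟨h1, h2⟩
  · exact ⟨3, by rw [nbr3, Prod.mk.injEq]; omega⟩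
  · exact ⟨0, by rw [nbr0, Prod.mk.injEq]; omega⟩
  · exact ⟨4, by rw [nbr4, Prod.mk.injEq]; omega⟩
  · exact ⟨1, by rw [nbr1, Prod.mk.injEq]; omega⟩
  · exact ⟨2, by rw [nbr2, Prod.mk.injEq]; omega⟩
  · exact ⟨5, by rw [nbr5, Prod.mk.injEq]; omega⟩

lemma nbr_ne (v : Pt) (i : Fin 6) : nbr v i ≠ v := by
  intro h
  have h2 := adj_nbr v i
  rw [h] at h2
  exact triGrid.loopless.irrefl v h2

lemma nbr_inj {v : Pt} {i j : Fin 6} (h : nbr v i = nbr v j) : i = j := by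
  apply dirs_inj
  simp only [nbr, Prod.mk.injEq] at h
  rw [Prod.ext_iff]
  omega

lemma gOn_mono {T1 T2 : Set Pt} (h : T1 ⊆ T2) : gOn T1 ≤ gOn T2 := by
  intro x y hxy
  exact ⟨hxy.1, h hxy.2.1, h hxy.2.2⟩

lemma reach_mono {T1 T2 : Set Pt} (h : T1 ⊆ T2) {x y : Pt} :
    (gOn T1).Reachable x y → (gOn T2).Reachable x y :=
  fun hr => hr.mono (gOn_mono h)

lemma compOf_mono {A S : Set Pt} (h : A ⊆ S) (x : Pt) : compOf S x ⊆ compOf A x :=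
  fun _ hy => reach_mono (Set.compl_subset_compl.mpr h) hy

/-- The endpoint of a walk in `gOn T` starting inside `T` is in `T`. -/
lemma reach_target_mem {T : Set Pt} {c x : Pt} (hc : c ∈ T)
    (h : (gOn T).Reachable c x) : x ∈ T := by
  obtain ⟨W⟩ := h
  exact gOn_walk_support_mem W hc x W.end_mem_support

/-- Reachability within the reach-component. -/
lemma reach_shrink {T : Set Pt} {c : Pt} (hc : c ∈ T) :
    ∀ {s x : Pt}, (gOn T).Walk s x → (gOn T).Reachable c s →
      (gOn {y | (gOn T).Reachable c y}).Reachable s x := by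
  intro s x W
  induction W with
  | nil => intro _; exact Reachable.refl _
  | @cons s z x hadj q ih =>
      intro hcs
      have hcz : (gOn T).Reachable c z := hcs.trans ⟨hadj.toWalk⟩
      have hedge : (gOn {y | (gOn T).Reachable c y}).Adj s z := ⟨hadj.1, hcs, hcz⟩
      exact (hedge.reachable).trans (ih hcz)

lemma arc_mem_iff (a : Fin 6) (len : ℕ) (hlen : len ≤ 6) (i : Fin 6) :
    (∃ k : ℕ, k < len ∧ i = a + Fin.ofNat 6 k) ↔ ((i - a : Fin 6) : ℕ) < len := by
  constructor
  · rintro ⟨k, hk, rfl⟩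
    rw [add_sub_cancel_left]
    rwa [Fin.val_ofNat, Nat.mod_eq_of_lt (by omega)]
  · intro h
    exact ⟨((i - a : Fin 6) : ℕ), h, by rw [show Fin.ofNat 6 ((i - a : Fin 6) : ℕ) = i - a from
      Fin.ext (by rw [Fin.val_ofNat]; exact Nat.mod_eq_of_lt (i - a).isLt), add_comm, sub_add_cancel]⟩

lemma isArc_of_finset (F : Finset (Fin 6)) (a : Fin 6) (len : ℕ)
    (h1 : 0 < len) (h2 : len ≤ 6)
    (hmem : ∀ i : Fin 6, i ∈ F ↔ ((i - a : Fin 6) : ℕ) < len) :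
    IsArc (↑F : Set (Fin 6)) := by
  refine ⟨a, len, h1, h2, ?_⟩
  ext i
  rw [Set.mem_setOf_eq, arc_mem_iff a len h2 i, Finset.mem_coe, hmem]

lemma isArc_compl_singleton (j : Fin 6) : IsArc {i | i ≠ j} := by
  have : {i : Fin 6 | i ≠ j} = (↑(({j} : Finset (Fin 6))ᶜ) : Set (Fin 6)) := by
    ext i; simp
  rw [this]
  refine isArc_of_finset _ (j + 1) 5 (by norm_num) (by norm_num) ?_
  intro i
  simp only [Finset.mem_compl, Finset.mem_singleton]
  exact (by decide : ∀ (i j : Fin 6), (¬i = j) ↔ ((i - (j + 1) : Fin 6) : ℕ) < 5) i j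

lemma ncard_compl_singleton (j : Fin 6) : ({i | i ≠ j} : Set (Fin 6)).ncard = 5 := by
  have : {i : Fin 6 | i ≠ j} = (↑(({j} : Finset (Fin 6))ᶜ) : Set (Fin 6)) := by
    ext i; simp
  rw [this, Set.ncard_coe_finset, Finset.card_compl]
  simp

end SCEAux
namespace SCEAux

open SimpleGraph

/-- Two distinct SCE points. -/
def twoSCE (S : Set Pt) : Prop :=
  ∃ u1 u2 : Pt, u1 ≠ u2 ∧ u1 ∈ S ∧ u2 ∈ S ∧ SCE S u1 ∧ SCE S u2

lemma escape_to_v {S : Set Pt} {v : Pt} {A : Set Pt}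
    (hAsub : A ⊆ S \ {v})
    (hclose : ∀ z ∈ A, ∀ w, w ∈ S → w ≠ v → triGrid.Adj z w → w ∈ A) :
    ∀ {y : Pt}, (gOn S).Walk y v → y ∉ A → (gOn Aᶜ).Reachable y v := by
  suffices h : ∀ {y t : Pt}, (gOn S).Walk y t → t = v → y ∉ A → (gOn Aᶜ).Reachable y v by
    intro y W hy
    exact h W rfl hy
  intro y t W
  induction W with
  | nil =>
      intro ht _
      subst ht
      exact Reachable.refl _
  | @cons y z tt hadj q ih =>
      intro htv hyA
      by_cases hyv : y = v
      · subst hyv; exact Reachable.refl _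
      · by_cases hzA : z ∈ A
        · exact absurd (hclose z hzA y hadj.2.1 hyv (triGrid.adj_symm hadj.1)) hyA
        · exact (SimpleGraph.Adj.reachable
            (⟨hadj.1, hyA, hzA⟩ : (gOn Aᶜ).Adj y z)).trans (ih htv hzA)

lemma j_succ_ne : ∀ j : Fin 6, j + 1 ≠ j := by decide

set_option maxHeartbeats 1000000 in
/-- From a component of `S \ {v}` hanging off the bad corner `v`, extract an SCE
point of `S` lying in that component. -/
lemma side {S : Set Pt} (hfin : S.Finite) (hSC : SimplyConnectedShape S)
    {v a b m : Pt} (hvS : v ∈ S) (haS : a ∈ S) (hbS : b ∈ S) (hm : m ∉ S)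
    (hvm : triGrid.Adj v m)
    (ha_ne : a ≠ v) (hb_ne : b ≠ v)
    (hOnly : ∀ q ∈ S, triGrid.Adj v q → q = a ∨ q = b)
    (hab : ¬ (gOn (S \ {v})).Reachable a b)
    (c o : Pt) (j : Fin 6) (hco : (c = a ∧ o = b) ∨ (c = b ∧ o = a))
    (hnbrj : nbr c j = v)
    (IH : ∀ T : Set Pt, T.ncard < S.ncard → SimplyConnectedShape T → 2 ≤ T.ncard → twoSCE T) :
    ∃ u, (gOn (S \ {v})).Reachable c u ∧ u ∈ S ∧ SCE S u := by
  have hcS : c ∈ S := by rcases hco with ⟨rfl, _⟩ | ⟨rfl, _⟩ <;> assumption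
  have hc_ne : c ≠ v := by rcases hco with ⟨rfl, _⟩ | ⟨rfl, _⟩ <;> assumption
  have hc_mem : c ∈ S \ {v} := ⟨hcS, fun h => hc_ne h⟩
  set A : Set Pt := {x | (gOn (S \ {v})).Reachable c x} with hA
  have hcA : c ∈ A := Reachable.refl _
  have hAsub : A ⊆ S \ {v} := fun x hx => reach_target_mem hc_mem hx
  have hAS : A ⊆ S := fun x hx => (hAsub hx).1
  have hvA : v ∉ A := fun h => (hAsub h).2 rfl
  have hoA : o ∉ A := by
    rcases hco with ⟨rfl, rfl⟩ | ⟨rfl, rfl⟩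
    · exact fun h => hab h
    · exact fun h => hab (Reachable.symm h)
  have hclose : ∀ z ∈ A, ∀ w, w ∈ S → w ≠ v → triGrid.Adj z w → w ∈ A := by
    intro z hz w hwS hwv hadj
    exact Reachable.trans hz
      (SimpleGraph.Adj.reachable ⟨hadj, hAsub hz, ⟨hwS, fun h => hwv h⟩⟩)
  have hmA : m ∉ A := fun h => hm (hAS h)
  have hInfm : (compOf S m).Infinite := not_hole_infinite hSC hm
  have hInfv : (compOf A v).Infinite := by
    refine hInfm.mono ?_
    intro y hy
    have h1 : compOf S m ⊆ compOf A m := compOf_mono hAS m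
    have h2 : (gOn Aᶜ).Reachable v m := SimpleGraph.Adj.reachable ⟨hvm, hvA, hmA⟩
    exact h2.trans (h1 hy)
  have hAnoHole : ∀ x, ¬ IsHolePoint A x := by
    rintro x ⟨hxA, hxfin⟩
    by_cases hxS : x ∈ S
    · by_cases hxv : x = v
      · subst hxv; exact hInfv hxfin
      · obtain ⟨W⟩ := hSC.1.2 x hxS v hvS
        have hr := escape_to_v hAsub hclose W hxA
        refine hInfv.mono ?_ hxfin
        intro y hy
        exact hr.trans hy
    · exact (not_hole_infinite hSC hxS).mono (compOf_mono hAS x) hxfin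
  have hASC : SimplyConnectedShape A := by
    refine ⟨⟨⟨hfin.subset hAS, ⟨c, hcA⟩⟩, ?_⟩, hAnoHole⟩
    intro x hx y hy
    obtain ⟨Wx⟩ := (hx : (gOn (S \ {v})).Reachable c x)
    obtain ⟨Wy⟩ := (hy : (gOn (S \ {v})).Reachable c y)
    exact (reach_shrink hc_mem Wx (Reachable.refl _)).symm.trans
      (reach_shrink hc_mem Wy (Reachable.refl _))
  by_cases hA1 : ∀ x ∈ A, x = c
  · -- A = {c} : then c itself is SCE for S
    have houtc : outIdx S c = {i | i ≠ j} := by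
      ext i
      simp only [outIdx, Set.mem_setOf_eq]
      constructor
      · intro hno hij
        subst hij
        exact hno (by rw [hnbrj]; exact hvS)
      · intro hij hmem
        have hne_v : nbr c i ≠ v := by
          intro h
          exact hij (nbr_inj (h.trans hnbrj.symm))
        have : nbr c i ∈ A := hclose c hcA _ hmem hne_v (adj_nbr c i)
        exact nbr_ne c i (hA1 _ this)
    refine ⟨c, Reachable.refl _, hcS, ?_⟩
    refine ⟨houtc ▸ isArc_compl_singleton j, ?_, ?_⟩
    · rw [houtc, ncard_compl_singleton]; omega
    · refine ⟨j + 1, ?_, ?_⟩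
      · have : (j + 1 : Fin 6) ∈ outIdx S c := by rw [houtc]; exact j_succ_ne j
        exact this
      · refine not_hole_infinite hSC ?_
        have h2 : (j + 1 : Fin 6) ∈ outIdx S c := by rw [houtc]; exact j_succ_ne j
        exact h2
  · push_neg at hA1
    obtain ⟨x, hxA, hxc⟩ := hA1
    have hA2 : 2 ≤ A.ncard := by
      have := (Set.one_lt_ncard_iff (hfin.subset hAS)).mpr ⟨x, c, hxA, hcA, hxc⟩
      omega
    have hAlt : A.ncard < S.ncard := by
      refine Set.ncard_lt_ncard ⟨hAS, fun hSA => hvA (hSA hvS)⟩ hfin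
    obtain ⟨u1, u2, hne, hu1A, hu2A, hS1, hS2⟩ := IH A hAlt hASC hA2
    -- choose the one different from c
    obtain ⟨u, huA, huc, hSCEu⟩ : ∃ u, u ∈ A ∧ u ≠ c ∧ SCE A u := by
      by_cases h1c : u1 = c
      · exact ⟨u2, hu2A, fun h => hne (h1c.trans h.symm), hS2⟩
      · exact ⟨u1, hu1A, h1c, hS1⟩
    have huS : u ∈ S := hAS huA
    have houteq : outIdx S u = outIdx A u := by
      ext i
      simp only [outIdx, Set.mem_setOf_eq]
      constructor
      · intro hno hmem
        exact hno (hAS hmem)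
      · intro hno hmem
        apply hno
        by_cases hqv : nbr u i = v
        · exfalso
          have hadj_vu : triGrid.Adj v u := by
            have := adj_nbr u i
            rw [hqv] at this
            exact triGrid.adj_symm this
          rcases hOnly u huS hadj_vu with h | h
          · rcases hco with ⟨hca, hob⟩ | ⟨hcb, hoa⟩
            · exact huc (h.trans hca.symm)
            · exact hoA (by rw [hoa, ← h]; exact huA)
          · rcases hco with ⟨hca, hob⟩ | ⟨hcb, hoa⟩
            · exact hoA (by rw [hob, ← h]; exact huA)
            · exact huc (h.trans hcb.symm)
        · exact hclose u huA _ hmem hqv (adj_nbr u i)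
    obtain ⟨harc, hncard, _⟩ := hSCEu
    refine ⟨u, huA, huS, houteq ▸ harc, by rw [houteq]; exact hncard, ?_⟩
    have hne0 : (outIdx S u).Nonempty := by
      apply Set.nonempty_of_ncard_ne_zero
      rw [houteq]
      omega
    obtain ⟨i, hi⟩ := hne0
    exact ⟨i, hi, not_hole_infinite hSC hi⟩

end SCEAux
namespace SCEAux

open SimpleGraph

lemma fin6_cases : ∀ i : Fin 6, i = 0 ∨ i = 1 ∨ i = 2 ∨ i = 3 ∨ i = 4 ∨ i = 5 := by decide

lemma out_eq_finset {S : Set Pt} {v : Pt} (F : Finset (Fin 6))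
    (h : ∀ i : Fin 6, nbr v i ∉ S ↔ i ∈ F) : outIdx S v = ↑F := by
  ext i
  simp only [outIdx, Set.mem_setOf_eq, Finset.mem_coe, h i]

set_option maxHeartbeats 1000000 in
lemma atMax {S : Set Pt} (hSC : SimplyConnectedShape S) (h2 : 2 ≤ S.ncard)
    (IH : ∀ T : Set Pt, T.ncard < S.ncard → SimplyConnectedShape T → 2 ≤ T.ncard → twoSCE T)
    {v : Pt} (hv : v ∈ S)
    (hlex : ∀ q ∈ S, q.1 < v.1 ∨ (q.1 = v.1 ∧ q.2 ≤ v.2)) :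
    SCE S v ∨ twoSCE S := by
  have hfin : S.Finite := hSC.1.1.1
  have hlex1 : ∀ x y : ℤ, ((x, y) : Pt) ∈ S → x < v.1 ∨ (x = v.1 ∧ y ≤ v.2) := by
    intro x y hxy
    rcases hlex _ hxy with h | ⟨h1', h2'⟩
    · left; exact h
    · right; exact ⟨h1', h2'⟩
  have h0 : nbr v 0 ∉ S := by
    rw [nbr0]; intro h; rcases hlex1 _ _ h with h' | ⟨h', _⟩ <;> omega
  have h1 : nbr v 1 ∉ S := by
    rw [nbr1]; intro h; rcases hlex1 _ _ h with h' | ⟨_, h'⟩ <;> omega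
  have h5 : nbr v 5 ∉ S := by
    rw [nbr5]; intro h; rcases hlex1 _ _ h with h' | ⟨h', _⟩ <;> omega
  obtain ⟨u0, hu0S, hu0ne⟩ := Set.exists_ne_of_one_lt_ncard (s := S) (by omega) v
  have hnb : ∃ i : Fin 6, nbr v i ∈ S := by
    obtain ⟨W⟩ := hSC.1.2 v hv u0 hu0S
    cases W with
    | nil => exact absurd rfl hu0ne
    | cons hadj q =>
        obtain ⟨i, hi⟩ := adj_eq_nbr hadj.1
        exact ⟨i, hi ▸ hadj.2.2⟩
  have hnot015 : ∀ i : Fin 6, nbr v i ∈ S → i = 2 ∨ i = 3 ∨ i = 4 := by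
    intro i hi
    rcases fin6_cases i with rfl|rfl|rfl|rfl|rfl|rfl
    · exact absurd hi h0
    · exact absurd hi h1
    · left; rfl
    · right; left; rfl
    · right; right; rfl
    · exact absurd hi h5
  by_cases hm2 : nbr v 2 ∈ S <;> by_cases hm3 : nbr v 3 ∈ S <;> by_cases hm4 : nbr v 4 ∈ S
  -- case {2,3,4}
  · left
    have hout : outIdx S v = ↑({0,1,5} : Finset (Fin 6)) := out_eq_finset _ (by
      intro i; rcases fin6_cases i with rfl|rfl|rfl|rfl|rfl|rfl <;>
        simp [h0, h1, h5, hm2, hm3, hm4])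
    refine ⟨?_, ?_, ⟨0, h0, not_hole_infinite hSC h0⟩⟩
    · rw [hout]; exact isArc_of_finset _ 5 3 (by norm_num) (by norm_num) (by decide)
    · rw [hout, Set.ncard_coe_finset]; decide
  -- case {2,3}
  · left
    have hout : outIdx S v = ↑({0,1,4,5} : Finset (Fin 6)) := out_eq_finset _ (by
      intro i; rcases fin6_cases i with rfl|rfl|rfl|rfl|rfl|rfl <;>
        simp [h0, h1, h5, hm2, hm3, hm4])
    refine ⟨?_, ?_, ⟨0, h0, not_hole_infinite hSC h0⟩⟩
    · rw [hout]; exact isArc_of_finset _ 4 4 (by norm_num) (by norm_num) (by decide)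
    · rw [hout, Set.ncard_coe_finset]; decide
  -- case {2,4} : BAD
  · right
    have haS : ((v.1 - 1, v.2 + 1) : Pt) ∈ S := by rw [← nbr2]; exact hm2
    have hbS : ((v.1, v.2 - 1) : Pt) ∈ S := by rw [← nbr4]; exact hm4
    have hmS : ((v.1 - 1, v.2) : Pt) ∉ S := by rw [← nbr3]; exact hm3
    have hminf : (compOf S ((v.1 - 1, v.2) : Pt)).Infinite := not_hole_infinite hSC hmS
    have hlex' : ∀ q ∈ S, q.1 ≤ v.1 := by
      intro q hq; rcases hlex q hq with h | ⟨h, _⟩ <;> omega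
    have hnr := noReach hfin v.1 v.2 hv hlex' haS hbS hmS hminf
    have hab : ¬ (gOn (S \ {v})).Reachable (nbr v 2) (nbr v 4) := by
      rw [nbr2, nbr4]; exact hnr
    have hOnly : ∀ q ∈ S, triGrid.Adj v q → q = nbr v 2 ∨ q = nbr v 4 := by
      intro q hq hadj
      obtain ⟨i, rfl⟩ := adj_eq_nbr hadj
      rcases hnot015 i hq with rfl | rfl | rfl
      · left; rfl
      · exact absurd hq hm3
      · right; rfl
    have hnbrj_a : nbr (nbr v 2) 5 = v := by
      rw [nbr2, nbr5]
      exact Prod.ext (show v.1 - 1 + 1 = v.1 by omega) (show v.2 + 1 - 1 = v.2 by omega)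
    have hnbrj_b : nbr (nbr v 4) 1 = v := by
      rw [nbr4, nbr1]
      exact Prod.ext (show v.1 = v.1 by rfl) (show v.2 - 1 + 1 = v.2 by omega)
    obtain ⟨w1, hw1r, hw1S, hSCE1⟩ := side hfin hSC hv hm2 hm4 hm3 (adj_nbr v 3)
      (nbr_ne v 2) (nbr_ne v 4) hOnly hab (nbr v 2) (nbr v 4) 5 (Or.inl ⟨rfl, rfl⟩) hnbrj_a IH
    obtain ⟨w2, hw2r, hw2S, hSCE2⟩ := side hfin hSC hv hm2 hm4 hm3 (adj_nbr v 3)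
      (nbr_ne v 2) (nbr_ne v 4) hOnly hab (nbr v 4) (nbr v 2) 1 (Or.inr ⟨rfl, rfl⟩) hnbrj_b IH
    refine ⟨w1, w2, ?_, hw1S, hw2S, hSCE1, hSCE2⟩
    intro h
    subst h
    exact hab (hw1r.trans hw2r.symm)
  -- case {2}
  · left
    have hout : outIdx S v = ↑({0,1,3,4,5} : Finset (Fin 6)) := out_eq_finset _ (by
      intro i; rcases fin6_cases i with rfl|rfl|rfl|rfl|rfl|rfl <;>
        simp [h0, h1, h5, hm2, hm3, hm4])
    refine ⟨?_, ?_, ⟨0, h0, not_hole_infinite hSC h0⟩⟩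
    · rw [hout]; exact isArc_of_finset _ 3 5 (by norm_num) (by norm_num) (by decide)
    · rw [hout, Set.ncard_coe_finset]; decide
  -- case {3,4}
  · left
    have hout : outIdx S v = ↑({0,1,2,5} : Finset (Fin 6)) := out_eq_finset _ (by
      intro i; rcases fin6_cases i with rfl|rfl|rfl|rfl|rfl|rfl <;>
        simp [h0, h1, h5, hm2, hm3, hm4])
    refine ⟨?_, ?_, ⟨0, h0, not_hole_infinite hSC h0⟩⟩
    · rw [hout]; exact isArc_of_finset _ 5 4 (by norm_num) (by norm_num) (by decide)
    · rw [hout, Set.ncard_coe_finset]; decide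
  -- case {3}
  · left
    have hout : outIdx S v = ↑({0,1,2,4,5} : Finset (Fin 6)) := out_eq_finset _ (by
      intro i; rcases fin6_cases i with rfl|rfl|rfl|rfl|rfl|rfl <;>
        simp [h0, h1, h5, hm2, hm3, hm4])
    refine ⟨?_, ?_, ⟨0, h0, not_hole_infinite hSC h0⟩⟩
    · rw [hout]; exact isArc_of_finset _ 4 5 (by norm_num) (by norm_num) (by decide)
    · rw [hout, Set.ncard_coe_finset]; decide
  -- case {4}
  · left
    have hout : outIdx S v = ↑({0,1,2,3,5} : Finset (Fin 6)) := out_eq_finset _ (by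
      intro i; rcases fin6_cases i with rfl|rfl|rfl|rfl|rfl|rfl <;>
        simp [h0, h1, h5, hm2, hm3, hm4])
    refine ⟨?_, ?_, ⟨0, h0, not_hole_infinite hSC h0⟩⟩
    · rw [hout]; exact isArc_of_finset _ 5 5 (by norm_num) (by norm_num) (by decide)
    · rw [hout, Set.ncard_coe_finset]; decide
  -- case {} : impossible
  · exfalso
    obtain ⟨i, hi⟩ := hnb
    rcases hnot015 i hi with rfl | rfl | rfl <;> contradiction

end SCEAux
namespace SCEAux

open SimpleGraph

def negP (p : Pt) : Pt := (-p.1, -p.2)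

lemma negP_invol (p : Pt) : negP (negP p) = p := by simp [negP]

lemma negP_inj : Function.Injective negP := by
  intro p q h
  have := congrArg negP h
  rwa [negP_invol, negP_invol] at this

lemma negP_bij : Function.Bijective negP :=
  ⟨negP_inj, fun y => ⟨negP y, negP_invol y⟩⟩

lemma image_negP_image (S : Set Pt) : negP '' (negP '' S) = S := by
  ext z
  constructor
  · rintro ⟨y, ⟨w, hw, rfl⟩, rfl⟩
    rwa [negP_invol]
  · intro hz
    exact ⟨negP z, ⟨z, hz, rfl⟩, negP_invol z⟩

lemma mem_negP {S : Set Pt} {x : Pt} : negP x ∈ negP '' S ↔ x ∈ S := by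
  constructor
  · rintro ⟨y, hy, he⟩
    rwa [← negP_inj he]
  · intro h
    exact ⟨x, h, rfl⟩

lemma negP_adj {u w : Pt} : triGrid.Adj (negP u) (negP w) ↔ triGrid.Adj u w := by
  rw [adj_iff', adj_iff']
  simp only [negP]
  omega

lemma reach_neg {S : Set Pt} {x y : Pt} (h : (gOn S).Reachable x y) :
    (gOn (negP '' S)).Reachable (negP x) (negP y) := by
  refine Reachable.map ⟨negP, ?_⟩ h
  intro a b hab
  exact ⟨negP_adj.mpr hab.1, ⟨a, hab.2.1, rfl⟩, ⟨b, hab.2.2, rfl⟩⟩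

lemma compl_neg (S : Set Pt) : (negP '' S)ᶜ = negP '' (Sᶜ) :=
  (Set.image_compl_eq negP_bij).symm

lemma reach_neg_compl {S : Set Pt} {x y : Pt} (h : (gOn Sᶜ).Reachable x y) :
    (gOn ((negP '' S)ᶜ)).Reachable (negP x) (negP y) := by
  rw [compl_neg]
  exact reach_neg h

lemma compOf_neg (S : Set Pt) (x : Pt) :
    compOf (negP '' S) (negP x) = negP '' (compOf S x) := by
  ext y
  constructor
  · intro hy
    have h2 := reach_neg_compl (S := negP '' S) hy
    rw [image_negP_image, negP_invol] at h2
    exact ⟨negP y, h2, negP_invol y⟩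
  · rintro ⟨z, hz, rfl⟩
    exact reach_neg_compl hz

lemma SCS_neg {S : Set Pt} (h : SimplyConnectedShape S) :
    SimplyConnectedShape (negP '' S) := by
  refine ⟨⟨⟨h.1.1.1.image _, h.1.1.2.image _⟩, ?_⟩, ?_⟩
  · rintro x ⟨x0, hx0, rfl⟩ y ⟨y0, hy0, rfl⟩
    exact reach_neg (h.1.2 x0 hx0 y0 hy0)
  · rintro x ⟨hx1, hx2⟩
    have hx1' : negP x ∉ S := fun hc => hx1 (by rw [← negP_invol x]; exact ⟨negP x, hc, rfl⟩)
    have hx2' : (compOf S (negP x)).Finite := by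
      have he : compOf (negP '' S) x = negP '' (compOf S (negP x)) := by
        have := compOf_neg S (negP x)
        rwa [negP_invol] at this
      rw [he] at hx2
      exact Set.Finite.of_finite_image hx2 negP_inj.injOn
    exact h.2 (negP x) ⟨hx1', hx2'⟩

lemma dirs_neg3 : ∀ i : Fin 6, (dirs (i+3)).1 = -(dirs i).1 ∧ (dirs (i+3)).2 = -(dirs i).2 := by
  decide

lemma fin_add33 : ∀ j : Fin 6, j + 3 + 3 = j := by decide

lemma nbr_neg (u : Pt) (i : Fin 6) : nbr (negP u) i = negP (nbr u (i + 3)) := by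
  have hd := dirs_neg3 i
  refine Prod.ext ?_ ?_ <;> simp [negP, nbr] <;> omega

lemma outIdx_neg {S : Set Pt} {u : Pt} :
    outIdx S u = {j | j + 3 ∈ outIdx (negP '' S) (negP u)} := by
  ext j
  simp only [outIdx, Set.mem_setOf_eq]
  rw [nbr_neg u (j + 3), fin_add33, mem_negP]

lemma isArc_shift {I : Set (Fin 6)} (hI : IsArc I) (c : Fin 6) : IsArc {j | j + c ∈ I} := by
  obtain ⟨A, len, hl1, hl2, rfl⟩ := hI
  refine ⟨A - c, len, hl1, hl2, ?_⟩
  ext j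
  simp only [Set.mem_setOf_eq]
  constructor
  · rintro ⟨k, hk, he⟩
    exact ⟨k, hk, (eq_sub_of_add_eq he).trans (add_sub_right_comm A (Fin.ofNat 6 k) c)⟩
  · rintro ⟨k, hk, rfl⟩
    refine ⟨k, hk, ?_⟩
    abel

lemma ncard_shift (I : Set (Fin 6)) (c : Fin 6) : {j | j + c ∈ I}.ncard = I.ncard := by
  have he : {j | j + c ∈ I} = (fun i => i - c) '' I := by
    ext z
    simp only [Set.mem_setOf_eq, Set.mem_image]
    constructor
    · intro hz
      exact ⟨z + c, hz, add_sub_cancel_right z c⟩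
    · rintro ⟨i, hi, rfl⟩
      rwa [sub_add_cancel]
  rw [he, Set.ncard_image_of_injective]
  intro x y h
  have h2 := congrArg (· + c) h
  simpa [sub_add_cancel] using h2

lemma SCE_neg {S : Set Pt} {u : Pt} (hSC : SimplyConnectedShape S)
    (h : SCE (negP '' S) (negP u)) : SCE S u := by
  obtain ⟨harc, hnc, _⟩ := h
  have hout : outIdx S u = {j | j + 3 ∈ outIdx (negP '' S) (negP u)} := outIdx_neg
  refine ⟨hout ▸ isArc_shift harc 3, ?_, ?_⟩
  · rw [hout, ncard_shift]
    exact hnc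
  · have hne : (outIdx S u).Nonempty := by
      apply Set.nonempty_of_ncard_ne_zero
      rw [hout, ncard_shift]
      omega
    obtain ⟨i, hi⟩ := hne
    exact ⟨i, hi, not_hole_infinite hSC hi⟩

end SCEAux
namespace SCEAux

open SimpleGraph

lemma exists_lexmax {S : Set Pt} (hfin : S.Finite) (hne : S.Nonempty) :
    ∃ v ∈ S, ∀ q ∈ S, q.1 < v.1 ∨ (q.1 = v.1 ∧ q.2 ≤ v.2) := by
  obtain ⟨v, hvS, hmax⟩ := Set.exists_max_image S (fun p => toLex p) hfin hne
  refine ⟨v, hvS, ?_⟩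
  intro q hq
  have h := hmax q hq
  rw [Prod.Lex.le_iff] at h
  exact h

lemma main : ∀ n : ℕ, ∀ S : Set Pt, S.ncard = n → SimplyConnectedShape S →
    2 ≤ S.ncard → twoSCE S := by
  intro n
  induction n using Nat.strong_induction_on with
  | _ n IH =>
    intro S hn hSC h2
    have hfin : S.Finite := hSC.1.1.1
    have IH' : ∀ T : Set Pt, T.ncard < S.ncard → SimplyConnectedShape T →
        2 ≤ T.ncard → twoSCE T := by
      intro T hT hTSC hT2
      exact IH T.ncard (hn ▸ hT) T rfl hTSC hT2
    obtain ⟨v, hvS, hvmax⟩ := exists_lexmax hfin hSC.1.1.2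
    rcases atMax hSC h2 IH' hvS hvmax with hv | h2S
    · have hN : SimplyConnectedShape (negP '' S) := SCS_neg hSC
      have hNcard : (negP '' S).ncard = S.ncard := Set.ncard_image_of_injective S negP_inj
      have IHN : ∀ T : Set Pt, T.ncard < (negP '' S).ncard → SimplyConnectedShape T →
          2 ≤ T.ncard → twoSCE T := by
        rw [hNcard]; exact IH'
      obtain ⟨w, hwN, hwmax⟩ := exists_lexmax (hfin.image _) (hSC.1.1.2.image _)
      rcases atMax hN (by rw [hNcard]; exact h2) IHN hwN hwmax with hw | h2N
      · obtain ⟨u', hu'S, rfl⟩ := hwN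
        have hSCEu' : SCE S u' := SCE_neg hSC hw
        have hne : u' ≠ v := by
          intro he
          have hall : ∀ q ∈ S, q = v := by
            intro q hq
            have h1 := hvmax q hq
            have h2' := hwmax (negP q) ⟨q, hq, rfl⟩
            rw [he] at h2'
            simp only [negP] at h2'
            rw [Prod.ext_iff]
            constructor <;> omega
          have hsing : S = {v} := Set.eq_singleton_iff_unique_mem.mpr ⟨hvS, hall⟩
          rw [hsing, Set.ncard_singleton] at h2
          omega
        exact ⟨v, u', fun h => hne h.symm, hvS, hu'S, hv, hSCEu'⟩
      · obtain ⟨w1, w2, hne, hw1, hw2, hS1, hS2⟩ := h2N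
        obtain ⟨u1, hu1, rfl⟩ := hw1
        obtain ⟨u2, hu2, rfl⟩ := hw2
        exact ⟨u1, u2, fun h => hne (by rw [h]), hu1, hu2,
          SCE_neg hSC hS1, SCE_neg hSC hS2⟩
    · exact h2S

end SCEAux

/-- A simply-connected shape with at least two points has an SCE
(strictly convex and erodable) point. -/
theorem stmt5 (S : Set (ℤ × ℤ)) (h : SimplyConnectedShape S) (h2 : 2 ≤ S.ncard) :
    ∃ v ∈ S, SCE S v := by
  obtain ⟨u1, u2, hne, hu1, hu2, hS1, hS2⟩ := SCEAux.main S.ncard S rfl h h2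
  exact ⟨u1, hu1, hS1⟩
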